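/- arXiv:math/0509280 — 4 statements merged into one kernel-verified Lean document; each statement's English description precedes it below -/
import Mathlib

section
/- In the pair-HMM, suppose the marginals of the diagonal emission distribution satisfy h_X = f and h_Y = g (Assumption 3). Then for any integers n, m, any time t, and any sequence x_{1:n} of letters, P(Z_t = (n,m), X_{1:n} = x_{1:n}) = P(Z_t = (n,m)) · ∏_{i=1}^n f(x_i); and symmetrically P(Z_t = (n,m), Y_{1:m} = y_{1:m}) = P(Z_t = (n,m)) · ∏_{j=1}^m g(y_j). -/
open Finset Filter MeasureTheory
open scoped Classical

noncomputable section

/-- Hidden state space: 0 = horizontal step (1,0), 1 = vertical step (0,1), 2 = diagonal step (1,1). -/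
abbrev E : Type := Fin 3

/-- The lattice step associated with each hidden state. -/
def stepv : E → ℕ × ℕ := ![(1,0), (0,1), (1,1)]

/-- Number of X-letters emitted by the first `t` hidden steps. -/
def Nn (u : ℕ → E) (t : ℕ) : ℕ := ∑ i ∈ Finset.range t, (stepv (u i)).1

/-- Number of Y-letters emitted by the first `t` hidden steps. -/
def Mm (u : ℕ → E) (t : ℕ) : ℕ := ∑ i ∈ Finset.range t, (stepv (u i)).2

/-- Extend a finite hidden path to an infinite one (junk value 0 beyond `l`). -/
def extPath {l : ℕ} (u : Fin l → E) : ℕ → E := fun i => if h : i < l then u ⟨i, h⟩ else 0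

/-- Conditional probability of the emitted letters for hidden steps `s, …, t-1`
(0-indexed) along path `u`, with observation streams `x` and `y` (0-indexed). -/
def emit {A : Type} (f g : A → ℝ) (h : A → A → ℝ) (x y : ℕ → A) (u : ℕ → E) (s t : ℕ) : ℝ :=
  ∏ i ∈ Finset.Ico s t,
    if u i = 0 then f (x (Nn u i))
    else if u i = 1 then g (y (Mm u i))
    else h (x (Nn u i)) (y (Mm u i))

/-- Probability of a finite hidden path under initial law `mu` and transition matrix `pr`. -/
def pathProb (pr : E → E → ℝ) (mu : E → ℝ) {l : ℕ} (u : Fin l → E) : ℝ :=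
  mu (extPath u 0) * ∏ i ∈ Finset.range (l - 1), pr (extPath u i) (extPath u (i + 1))

/-- `P_θ(ε_{1:t} ∈ E_{n,m} with |path| = t, X_{1:n} = x, Y_{1:m} = y)`:
joint probability of a hidden path of length `t` ending at `(n,m)` together with
the emitted observations. -/
def jointProb {A : Type} (pr : E → E → ℝ) (mu : E → ℝ) (f g : A → ℝ) (h : A → A → ℝ)
    (x y : ℕ → A) (t n m : ℕ) : ℝ :=
  ∑ u : Fin t → E,
    if Nn (extPath u) t = n ∧ Mm (extPath u) t = m then
      pathProb pr mu u * emit f g h x y (extPath u) 0 t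
    else 0

/-- `Q_θ(x_{1:n}, y_{1:m}) = Σ_{e ∈ E_{n,m}} P_θ(ε_{1:|e|} = e, x_{1:n}, y_{1:m})`:
all hidden paths ending at `(n,m)` have length ≤ n+m. -/
def Qprob {A : Type} (pr : E → E → ℝ) (mu : E → ℝ) (f g : A → ℝ) (h : A → A → ℝ)
    (x y : ℕ → A) (n m : ℕ) : ℝ :=
  ∑ l ∈ Finset.range (n + m + 1), jointProb pr mu f g h x y l n m

/-- `P_θ(Z_t = (n,m))`. -/
def walkProb (pr : E → E → ℝ) (mu : E → ℝ) (t n m : ℕ) : ℝ :=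
  ∑ u : Fin t → E,
    if Nn (extPath u) t = n ∧ Mm (extPath u) t = m then pathProb pr mu u else 0

/-- `P_θ(∃ s ≥ 1, Z_s = (n,m))` (the walk is strictly increasing in `n+m`, so the
events for different path lengths are disjoint and the probability is a sum). -/
def hitProb (pr : E → E → ℝ) (mu : E → ℝ) (n m : ℕ) : ℝ :=
  ∑ l ∈ Finset.Icc 1 (n + m), walkProb pr mu l n m

end

/-- Extend a finite sequence of letters to an infinite stream (junk `default` beyond `l`). -/
noncomputable def extObs {A : Type} [Inhabited A] {l : ℕ} (v : Fin l → A) : ℕ → A :=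
  fun i => if h : i < l then v ⟨i, h⟩ else default

/- The unobserved letters can be summed out one hidden step at a time, starting from the last:
a vertical step then contributes `∑ g = 1`, a diagonal step `∑_b h(x, b) = f(x)` and a horizontal
step `f(x)`. Hence along every path ending at `(n,m)` the marginal emission probability is
`∏ f(x_i)`, independently of the path, and factoring it out of the sum over paths leaves
`P(Z_t = (n,m))`. Exchanging the horizontal and vertical states exchanges the roles of the two
sequences, which gives the statement about `Y`. -/

section

variable {A : Type}

theorem sum_fun_fin_succ [Fintype A] {m : ℕ} (F : (Fin (m + 1) → A) → ℝ) :
    ∑ v, F v = ∑ w : Fin m → A, ∑ a, F (Fin.snoc w a) := by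
  rw [← (Fin.snocEquiv fun _ => A).sum_comp, Fintype.sum_prod_type, Finset.sum_comm]
  rfl

theorem extObs_snoc_of_lt [Inhabited A] {m : ℕ} (w : Fin m → A) (a : A) {j : ℕ} (hj : j < m) :
    extObs (Fin.snoc w a : Fin (m + 1) → A) j = extObs w j := by
  rw [extObs, dif_pos (hj.trans m.lt_succ_self), extObs, dif_pos hj]
  exact Fin.snoc_castSucc (α := fun _ => A) a w ⟨j, hj⟩

theorem extObs_snoc_self [Inhabited A] {m : ℕ} (w : Fin m → A) (a : A) :
    extObs (Fin.snoc w a : Fin (m + 1) → A) m = a := by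
  rw [extObs, dif_pos m.lt_succ_self]
  exact Fin.snoc_last (α := fun _ => A) a w

theorem Nn_succ (u : ℕ → E) (t : ℕ) : Nn u (t + 1) = Nn u t + (stepv (u t)).1 :=
  sum_range_succ _ t

theorem Mm_succ (u : ℕ → E) (t : ℕ) : Mm u (t + 1) = Mm u t + (stepv (u t)).2 :=
  sum_range_succ _ t

theorem E.eq_one_or_eq_two_of_ne_zero : ∀ {e : E}, e ≠ 0 → e = 1 ∨ e = 2 := by decide

theorem stepv_snd_of_ne_zero : ∀ {e : E}, e ≠ 0 → (stepv e).2 = 1 := by decide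

theorem Mm_succ_of_ne_zero {u : ℕ → E} {t : ℕ} (hu : u t ≠ 0) : Mm u (t + 1) = Mm u t + 1 := by
  rw [Mm_succ, stepv_snd_of_ne_zero hu]

theorem Mm_lt_of_ne_zero {u : ℕ → E} {i t : ℕ} (hit : i < t) (hu : u i ≠ 0) :
    Mm u i < Mm u t :=
  calc Mm u i < Mm u (i + 1) := by rw [Mm_succ_of_ne_zero hu]; exact Nat.lt_succ_self _
    _ ≤ Mm u t := sum_le_sum_of_subset (range_subset_range.2 hit)

def emission (f g : A → ℝ) (h : A → A → ℝ) (e : E) (a b : A) : ℝ :=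
  if e = 0 then f a else if e = 1 then g b else h a b

theorem emit_eq_prod_emission (f g : A → ℝ) (h : A → A → ℝ) (x y : ℕ → A) (u : ℕ → E)
    (s t : ℕ) :
    emit f g h x y u s t = ∏ i ∈ Ico s t, emission f g h (u i) (x (Nn u i)) (y (Mm u i)) :=
  rfl

theorem emit_succ (f g : A → ℝ) (h : A → A → ℝ) (x y : ℕ → A) (u : ℕ → E) (t : ℕ) :
    emit f g h x y u 0 (t + 1) =
      emit f g h x y u 0 t * emission f g h (u t) (x (Nn u t)) (y (Mm u t)) :=
  prod_Ico_succ_top t.zero_le _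

theorem emit_congr_right (f g : A → ℝ) (h : A → A → ℝ) (x : ℕ → A) {y y' : ℕ → A}
    (u : ℕ → E) (t : ℕ) (hy : ∀ j < Mm u t, y j = y' j) :
    emit f g h x y u 0 t = emit f g h x y' u 0 t := by
  refine prod_congr rfl fun i hi => ?_
  by_cases hu : u i = 0
  · simp only [hu, if_true]
  · rw [hy _ (Mm_lt_of_ne_zero (mem_Ico.1 hi).2 hu)]

theorem emit_extObs_snoc [Inhabited A] (f g : A → ℝ) (h : A → A → ℝ) (x : ℕ → A)
    (u : ℕ → E) (t : ℕ) (w : Fin (Mm u t) → A) (a : A) :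
    emit f g h x (extObs (Fin.snoc w a : Fin (Mm u t + 1) → A)) u 0 (t + 1) =
      emit f g h x (extObs w) u 0 t * emission f g h (u t) (x (Nn u t)) a := by
  rw [emit_succ, extObs_snoc_self,
    emit_congr_right f g h x u t fun j hj => extObs_snoc_of_lt w a hj]

theorem sum_emission_one [Fintype A] (f g : A → ℝ) (h : A → A → ℝ) (hg : ∑ b, g b = 1) (a : A) :
    ∑ b, emission f g h 1 a b = 1 := by
  simpa [emission] using hg

theorem sum_emission_two [Fintype A] (f g : A → ℝ) (h : A → A → ℝ) (hX : ∀ a, ∑ b, h a b = f a)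
    (a : A) : ∑ b, emission f g h 2 a b = f a := by
  simpa [emission] using hX a

theorem sum_emit_extObs_right [Fintype A] [Inhabited A] {f g : A → ℝ} {h : A → A → ℝ}
    (hg : ∑ b, g b = 1) (hX : ∀ a, ∑ b, h a b = f a) (x : ℕ → A) (u : ℕ → E) (t : ℕ) :
    ∑ yv : Fin (Mm u t) → A, emit f g h x (extObs yv) u 0 t = ∏ i ∈ range (Nn u t), f (x i) := by
  induction t with
  | zero =>
    change ∑ yv : Fin 0 → A, emit f g h x (extObs yv) u 0 0 = ∏ i ∈ range 0, f (x i)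
    simp [emit]
  | succ t ih =>
    by_cases hu : u t = 0
    · have hM : Mm u (t + 1) = Mm u t := by simp [Mm_succ, hu, stepv]
      rw [hM]
      simp only [emit_succ, emission, hu, if_true, ← sum_mul, ih, Nn_succ]
      simp [stepv, prod_range_succ]
    · rw [Mm_succ_of_ne_zero hu, sum_fun_fin_succ]
      simp only [emit_extObs_snoc, ← mul_sum, ← sum_mul, ih, Nn_succ]
      obtain hu | hu := E.eq_one_or_eq_two_of_ne_zero hu
      · simp [hu, sum_emission_one f g h hg, stepv]
      · simp [hu, sum_emission_two f g h hX, stepv, prod_range_succ]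

theorem stepv_swap : ∀ e : E, stepv (Equiv.swap 0 1 e) = (stepv e).swap := by decide

theorem Nn_swap_comp (u : ℕ → E) : Nn (Equiv.swap 0 1 ∘ u) = Mm u :=
  funext fun _ => by simp only [Nn, Mm, Function.comp, stepv_swap, Prod.fst_swap]

theorem Mm_swap_comp (u : ℕ → E) : Mm (Equiv.swap 0 1 ∘ u) = Nn u :=
  funext fun _ => by simp only [Nn, Mm, Function.comp, stepv_swap, Prod.snd_swap]

theorem emission_swap (f g : A → ℝ) (h : A → A → ℝ) (e : E) (a b : A) :
    emission g f (flip h) (Equiv.swap 0 1 e) b a = emission f g h e a b := by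
  fin_cases e <;> rfl

theorem emit_swap_comp (f g : A → ℝ) (h : A → A → ℝ) (x y : ℕ → A) (u : ℕ → E) (s t : ℕ) :
    emit g f (flip h) y x (Equiv.swap 0 1 ∘ u) s t = emit f g h x y u s t := by
  simp only [emit_eq_prod_emission, Nn_swap_comp, Mm_swap_comp, Function.comp, emission_swap]

theorem sum_emit_extObs_left [Fintype A] [Inhabited A] {f g : A → ℝ} {h : A → A → ℝ}
    (hf : ∑ a, f a = 1) (hY : ∀ b, ∑ a, h a b = g b) (y : ℕ → A) (u : ℕ → E) (t : ℕ) :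
    ∑ xv : Fin (Nn u t) → A, emit f g h (extObs xv) y u 0 t = ∏ j ∈ range (Mm u t), g (y j) := by
  have := sum_emit_extObs_right (h := flip h) hf hY y (Equiv.swap 0 1 ∘ u) t
  rw [Mm_swap_comp, Nn_swap_comp] at this
  simpa only [emit_swap_comp] using this

end

theorem sum_pathProb_mul_eq_walkProb_mul (pr : E → E → ℝ) (mu : E → ℝ) {t n m : ℕ}
    (F : (Fin t → E) → ℝ) (c : ℝ)
    (hF : ∀ u : Fin t → E, Nn (extPath u) t = n → Mm (extPath u) t = m → F u = c) :
    (∑ u : Fin t → E,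
      if Nn (extPath u) t = n ∧ Mm (extPath u) t = m then pathProb pr mu u * F u else 0) =
      walkProb pr mu t n m * c := by
  rw [walkProb, sum_mul]
  refine sum_congr rfl fun u _ => ?_
  split_ifs with hu
  · rw [hF u hu.1 hu.2]
  · rw [zero_mul]

/-- **Lemma 2 of the paper.** Under Assumption 3 (`h_X = f`, `h_Y = g`), for
any `t`, `n`, `m` and letters `x_{1:n}` resp. `y_{1:m}`,
`P(Z_t = (n,m), X_{1:n} = x) = P(Z_t = (n,m)) ∏_{i<n} f(x_i)` and symmetrically
`P(Z_t = (n,m), Y_{1:m} = y) = P(Z_t = (n,m)) ∏_{j<m} g(y_j)`.  Here the joint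
probability is the sum over hidden paths of length `t` ending at `(n,m)` of the path
probability times the emission probability, the unseen observation sequence being summed
out. -/
theorem marginal_observation_law {A : Type} [Fintype A] [Inhabited A]
    (pr : E → E → ℝ) (mu : E → ℝ) (f g : A → ℝ) (h : A → A → ℝ)
    (hfsum : ∑ a, f a = 1) (hgsum : ∑ a, g a = 1)
    (hX : ∀ a, ∑ b, h a b = f a) (hY : ∀ b, ∑ a, h a b = g b)
    (t n m : ℕ) :
    (∀ x : ℕ → A,
      (∑ u : Fin t → E,
        if Nn (extPath u) t = n ∧ Mm (extPath u) t = m then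
          pathProb pr mu u *
            ∑ yv : Fin m → A, emit f g h x (extObs yv) (extPath u) 0 t
        else 0)
      = walkProb pr mu t n m * ∏ i ∈ Finset.range n, f (x i)) ∧
    (∀ y : ℕ → A,
      (∑ u : Fin t → E,
        if Nn (extPath u) t = n ∧ Mm (extPath u) t = m then
          pathProb pr mu u *
            ∑ xv : Fin n → A, emit f g h (extObs xv) y (extPath u) 0 t
        else 0)
      = walkProb pr mu t n m * ∏ j ∈ Finset.range m, g (y j)) := by
  constructor
  · refine fun x => sum_pathProb_mul_eq_walkProb_mul pr mu _ _ fun u hN hM => ?_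
    subst hN hM
    exact sum_emit_extObs_right hgsum hX x (extPath u) t
  · refine fun y => sum_pathProb_mul_eq_walkProb_mul pr mu _ _ fun u hN hM => ?_
    subst hN hM
    exact sum_emit_extObs_left hfsum hY y (extPath u) t
end

section
/- In the pair-HMM with parameter θ in Θ_0 (all transition probabilities and all emission probabilities strictly positive), the auxiliary process W_{s,t} = max_{e∈E} log P(X_{N_s+1:N_t}, Y_{M_s+1:M_t} | ε_{s+1}=e) + log δ_θ, where δ_θ = min_{e,e'} π(e,e') > 0, is superadditive: W_{0,t} ≥ W_{0,s} + W_{s,t} for all 0 ≤ s < t. -/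
open Finset Filter MeasureTheory
open scoped Classical

/-- `P(X_{N_s+1:N_t}, Y_{M_s+1:M_t} | ε_{s+1} = e)`: conditional probability, given that
the `(s+1)`-th hidden step is `e`, that the next `t − s` hidden steps emit exactly the
observed segments (which are determined by the realized hidden path `ω` and the observation
streams `x, y`).  The sum runs over all hidden path segments of length `t − s` starting at
`e` whose steps sum to `(N_t − N_s, M_t − M_s)`. -/
noncomputable def segProb {A : Type} (pr : E → E → ℝ) (f g : A → ℝ) (h : A → A → ℝ)
    (x y : ℕ → A) (ω : ℕ → E) (s t : ℕ) (e : E) : ℝ :=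
  ∑ v : Fin (t - s) → E,
    if extPath v 0 = e ∧ Nn (extPath v) (t - s) = Nn ω t - Nn ω s
        ∧ Mm (extPath v) (t - s) = Mm ω t - Mm ω s then
      (∏ i ∈ Finset.range (t - s - 1), pr (extPath v i) (extPath v (i + 1))) *
        emit f g h (fun i => x (Nn ω s + i)) (fun j => y (Mm ω s + j)) (extPath v) 0 (t - s)
    else 0

/-- The auxiliary process `W_{s,t} = max_{e ∈ E} log P(X_{N_s+1:N_t}, Y_{M_s+1:M_t} | ε_{s+1} = e) + log δ_θ`. -/
noncomputable def Wproc {A : Type} (pr : E → E → ℝ) (f g : A → ℝ) (h : A → A → ℝ)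
    (x y : ℕ → A) (ω : ℕ → E) (δθ : ℝ) (s t : ℕ) : ℝ :=
  Real.log (⨆ e : E, segProb pr f g h x y ω s t e) + Real.log δθ

/-!
Cut a hidden path of length `t` at time `s`. A segment of length `s` starting at `e` followed by
a segment of length `t - s` starting at `e'` is a segment of length `t` starting at `e`, and its
weight is the product of the two weights times the one transition `ε_s → ε_{s+1}` joining them,
which is at least `δ_θ`. Since concatenation is a bijection onto the paths of length `t`, summing
gives `δ_θ · P(· | ε_1 = e) · P(· | ε_{s+1} = e') ≤ P(· | ε_1 = e)`; take maxima over `e, e'` and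
logarithms. For `s = 0` the first segment is empty, its probability is `1`, and the claim is
`log δ_θ ≤ 0`.
-/

def splice (a : ℕ → E) (s : ℕ) (b : ℕ → E) : ℕ → E :=
  fun j => if j < s then a j else b (j - s)

lemma splice_of_lt {a b : ℕ → E} {s j : ℕ} (hj : j < s) : splice a s b j = a j :=
  if_pos hj

@[simp]
lemma splice_add (a b : ℕ → E) (s j : ℕ) : splice a s b (s + j) = b j := by
  simp [splice]

lemma extPath_append {m n : ℕ} (u : Fin m → E) (v : Fin n → E) :
    extPath (Fin.append u v) = splice (extPath u) m (extPath v) := by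
  funext j
  rcases lt_or_ge j m with hjm | hmj
  · have hj : j < m + n := by omega
    simpa [extPath, splice, hjm, hj] using Fin.append_left u v ⟨j, hjm⟩
  · obtain ⟨i, rfl⟩ := Nat.exists_eq_add_of_le hmj
    rw [splice_add]
    by_cases hi : i < n
    · simpa [extPath, hi] using Fin.append_right u v ⟨i, hi⟩
    · simp [extPath, hi]

lemma Nn_add (u : ℕ → E) (s k : ℕ) : Nn u (s + k) = Nn u s + Nn (fun i => u (s + i)) k :=
  sum_range_add _ s k

lemma Mm_add (u : ℕ → E) (s k : ℕ) : Mm u (s + k) = Mm u s + Mm (fun i => u (s + i)) k :=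
  sum_range_add _ s k

lemma Nn_congr {u u' : ℕ → E} {k : ℕ} (huu' : ∀ j < k, u j = u' j) : Nn u k = Nn u' k :=
  sum_congr rfl fun j hj => by rw [huu' j (mem_range.mp hj)]

lemma Mm_congr {u u' : ℕ → E} {k : ℕ} (huu' : ∀ j < k, u j = u' j) : Mm u k = Mm u' k :=
  sum_congr rfl fun j hj => by rw [huu' j (mem_range.mp hj)]

lemma Nn_sub (u : ℕ → E) {s t : ℕ} (hst : s ≤ t) :
    Nn u t - Nn u s = Nn (fun i => u (s + i)) (t - s) := by
  rw [← Nat.add_sub_cancel' hst, Nn_add, Nat.add_sub_cancel_left, Nat.add_sub_cancel_left]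

lemma Mm_sub (u : ℕ → E) {s t : ℕ} (hst : s ≤ t) :
    Mm u t - Mm u s = Mm (fun i => u (s + i)) (t - s) := by
  rw [← Nat.add_sub_cancel' hst, Mm_add, Nat.add_sub_cancel_left, Nat.add_sub_cancel_left]

lemma Nn_splice (a b : ℕ → E) (s k : ℕ) : Nn (splice a s b) (s + k) = Nn a s + Nn b k := by
  rw [Nn_add, Nn_congr fun j hj => splice_of_lt hj]
  simp only [splice_add]

lemma Mm_splice (a b : ℕ → E) (s k : ℕ) : Mm (splice a s b) (s + k) = Mm a s + Mm b k := by
  rw [Mm_add, Mm_congr fun j hj => splice_of_lt hj]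
  simp only [splice_add]

section Emission

variable {A : Type} (f g : A → ℝ) (h : A → A → ℝ)

lemma emit_nonneg (hf : ∀ a, 0 ≤ f a) (hg : ∀ a, 0 ≤ g a) (hh : ∀ a b, 0 ≤ h a b)
    (x y : ℕ → A) (u : ℕ → E) (s t : ℕ) : 0 ≤ emit f g h x y u s t :=
  prod_nonneg fun _ _ => by split_ifs <;> apply_rules

lemma emit_pos (hf : ∀ a, 0 < f a) (hg : ∀ a, 0 < g a) (hh : ∀ a b, 0 < h a b)
    (x y : ℕ → A) (u : ℕ → E) (s t : ℕ) : 0 < emit f g h x y u s t :=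
  prod_pos fun _ _ => by split_ifs <;> apply_rules

lemma emit_add (x y : ℕ → A) (u : ℕ → E) (s k : ℕ) :
    emit f g h x y u 0 (s + k) = emit f g h x y u 0 s *
      emit f g h (fun i => x (Nn u s + i)) (fun j => y (Mm u s + j)) (fun i => u (s + i)) 0 k := by
  simp only [emit, ← range_eq_Ico, prod_range_add, Nn_add, Mm_add]

lemma emit_congr (x y : ℕ → A) {u u' : ℕ → E} {k : ℕ} (huu' : ∀ j < k, u j = u' j) :
    emit f g h x y u 0 k = emit f g h x y u' 0 k := by
  refine prod_congr rfl fun i hi => ?_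
  have hik : i < k := by simpa using hi
  have hbelow : ∀ j < i, u j = u' j := fun j hj => huu' j (hj.trans hik)
  rw [huu' i hik, Nn_congr hbelow, Mm_congr hbelow]

lemma emit_splice (x y : ℕ → A) (a b : ℕ → E) (s k : ℕ) :
    emit f g h x y (splice a s b) 0 (s + k) = emit f g h x y a 0 s *
      emit f g h (fun i => x (Nn a s + i)) (fun j => y (Mm a s + j)) b 0 k := by
  have hprefix : ∀ j < s, splice a s b j = a j := fun j hj => splice_of_lt hj
  rw [emit_add, emit_congr f g h x y hprefix, Nn_congr hprefix, Mm_congr hprefix]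
  simp only [splice_add]

end Emission

lemma prod_transitions_splice (pr : E → E → ℝ) (a b : ℕ → E) (r q : ℕ) :
    ∏ i ∈ range (r + 1 + q), pr (splice a (r + 1) b i) (splice a (r + 1) b (i + 1)) =
      (∏ i ∈ range r, pr (a i) (a (i + 1))) * pr (a r) (b 0) *
        ∏ i ∈ range q, pr (b i) (b (i + 1)) := by
  rw [prod_range_add, prod_range_succ]
  refine congrArg₂ (· * ·) (congrArg₂ (· * ·) (prod_congr rfl fun i hi => ?_) ?_)
    (prod_congr rfl fun i _ => ?_)
  · have hir : i < r := mem_range.mp hi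
    rw [splice_of_lt (by omega), splice_of_lt (by omega)]
  · rw [splice_of_lt (Nat.lt_succ_self r)]
    exact congrArg _ (splice_add a b (r + 1) 0)
  · rw [splice_add, add_assoc, splice_add]

section Segments

variable {A : Type} (pr : E → E → ℝ) (f g : A → ℝ) (h : A → A → ℝ)

def segWeight (x y : ℕ → A) (v : ℕ → E) (k : ℕ) : ℝ :=
  (∏ i ∈ range (k - 1), pr (v i) (v (i + 1))) * emit f g h x y v 0 k

def segTerm (x y : ℕ → A) (k : ℕ) (e : E) (n m : ℕ) (v : ℕ → E) : ℝ :=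
  if v 0 = e ∧ Nn v k = n ∧ Mm v k = m then segWeight pr f g h x y v k else 0

/-- `P(X_{1:n}, Y_{1:m}, Z_k = (n, m) | ε_1 = e)`. -/
def segSum (x y : ℕ → A) (k : ℕ) (e : E) (n m : ℕ) : ℝ :=
  ∑ v : Fin k → E, segTerm pr f g h x y k e n m (extPath v)

lemma segProb_eq_segSum (x y : ℕ → A) (ω : ℕ → E) (s t : ℕ) (e : E) :
    segProb pr f g h x y ω s t e =
      segSum pr f g h (fun i => x (Nn ω s + i)) (fun j => y (Mm ω s + j)) (t - s) e
        (Nn ω t - Nn ω s) (Mm ω t - Mm ω s) :=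
  rfl

lemma segProb_self (x y : ℕ → A) (ω : ℕ → E) (s : ℕ) (e : E) :
    segProb pr f g h x y ω s s e = if e = 0 then 1 else 0 := by
  simp [segProb, extPath, Nn, Mm, emit, eq_comm]

lemma segProb_zero_left (x y : ℕ → A) (ω : ℕ → E) (t : ℕ) (e : E) :
    segProb pr f g h x y ω 0 t e = segSum pr f g h x y t e (Nn ω t) (Mm ω t) := by
  simp [segProb_eq_segSum, Nn, Mm]

lemma iSup_segProb_self (x y : ℕ → A) (ω : ℕ → E) (s : ℕ) :
    ⨆ e, segProb pr f g h x y ω s s e = 1 := by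
  simp_rw [segProb_self]
  exact le_antisymm (ciSup_le fun e => by split_ifs <;> norm_num)
    (le_ciSup_of_le (Set.finite_range _).bddAbove 0 (by simp))

variable {pr f g h}

lemma segWeight_nonneg (hpr : ∀ e e', 0 ≤ pr e e') (hf : ∀ a, 0 ≤ f a) (hg : ∀ a, 0 ≤ g a)
    (hh : ∀ a b, 0 ≤ h a b) (x y : ℕ → A) (v : ℕ → E) (k : ℕ) :
    0 ≤ segWeight pr f g h x y v k :=
  mul_nonneg (prod_nonneg fun _ _ => hpr _ _) (emit_nonneg f g h hf hg hh x y v 0 k)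

lemma segWeight_pos (hpr : ∀ e e', 0 < pr e e') (hf : ∀ a, 0 < f a) (hg : ∀ a, 0 < g a)
    (hh : ∀ a b, 0 < h a b) (x y : ℕ → A) (v : ℕ → E) (k : ℕ) :
    0 < segWeight pr f g h x y v k :=
  mul_pos (prod_pos fun _ _ => hpr _ _) (emit_pos f g h hf hg hh x y v 0 k)

lemma segTerm_nonneg (hpr : ∀ e e', 0 ≤ pr e e') (hf : ∀ a, 0 ≤ f a) (hg : ∀ a, 0 ≤ g a)
    (hh : ∀ a b, 0 ≤ h a b) (x y : ℕ → A) (k : ℕ) (e : E) (n m : ℕ) (v : ℕ → E) :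
    0 ≤ segTerm pr f g h x y k e n m v := by
  unfold segTerm
  split_ifs
  exacts [segWeight_nonneg hpr hf hg hh x y v k, le_rfl]

lemma segWeight_splice (x y : ℕ → A) (a b : ℕ → E) (r q : ℕ) :
    segWeight pr f g h x y (splice a (r + 1) b) (r + 1 + (q + 1)) =
      segWeight pr f g h x y a (r + 1) * pr (a r) (b 0) *
        segWeight pr f g h (fun i => x (Nn a (r + 1) + i)) (fun j => y (Mm a (r + 1) + j))
          b (q + 1) := by
  rw [segWeight, show r + 1 + (q + 1) - 1 = r + 1 + q by omega, prod_transitions_splice,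
    emit_splice, segWeight, segWeight]
  simp only [Nat.add_sub_cancel]
  ring

lemma mul_segTerm_le_segTerm_splice (hpr : ∀ e e', 0 ≤ pr e e') (hf : ∀ a, 0 ≤ f a)
    (hg : ∀ a, 0 ≤ g a) (hh : ∀ a b, 0 ≤ h a b) {δ : ℝ} (hδ : ∀ e e', δ ≤ pr e e')
    (x y : ℕ → A) (r q : ℕ) (e e' : E) (n₁ m₁ n₂ m₂ : ℕ) (a b : ℕ → E) :
    δ * segTerm pr f g h x y (r + 1) e n₁ m₁ a *
        segTerm pr f g h (fun i => x (n₁ + i)) (fun j => y (m₁ + j)) (q + 1) e' n₂ m₂ b ≤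
      segTerm pr f g h x y (r + 1 + (q + 1)) e (n₁ + n₂) (m₁ + m₂) (splice a (r + 1) b) := by
  have hterm := segTerm_nonneg hpr hf hg hh x y (r + 1 + (q + 1)) e (n₁ + n₂) (m₁ + m₂)
    (splice a (r + 1) b)
  unfold segTerm at hterm ⊢
  by_cases ha : a 0 = e ∧ Nn a (r + 1) = n₁ ∧ Mm a (r + 1) = m₁
  swap
  · simpa [ha] using hterm
  by_cases hb : b 0 = e' ∧ Nn b (q + 1) = n₂ ∧ Mm b (q + 1) = m₂
  swap
  · simpa [hb] using hterm
  obtain ⟨ha₀, rfl, rfl⟩ := ha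
  obtain ⟨hb₀, rfl, rfl⟩ := hb
  rw [if_pos ⟨ha₀, rfl, rfl⟩, if_pos ⟨hb₀, rfl, rfl⟩,
    if_pos ⟨by rw [splice_of_lt r.succ_pos, ha₀], Nn_splice a b _ _, Mm_splice a b _ _⟩,
    segWeight_splice]
  have hWa := segWeight_nonneg hpr hf hg hh x y a (r + 1)
  have hWb := segWeight_nonneg hpr hf hg hh (fun i => x (Nn a (r + 1) + i))
    (fun j => y (Mm a (r + 1) + j)) b (q + 1)
  linear_combination mul_le_mul_of_nonneg_right (hδ (a r) (b 0)) (mul_nonneg hWa hWb)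

theorem mul_segSum_le (hpr : ∀ e e', 0 ≤ pr e e') (hf : ∀ a, 0 ≤ f a) (hg : ∀ a, 0 ≤ g a)
    (hh : ∀ a b, 0 ≤ h a b) {δ : ℝ} (hδ : ∀ e e', δ ≤ pr e e') (x y : ℕ → A) {k₁ k₂ : ℕ}
    (hk₁ : 0 < k₁) (hk₂ : 0 < k₂) (e e' : E) (n₁ m₁ n₂ m₂ : ℕ) :
    δ * segSum pr f g h x y k₁ e n₁ m₁ *
        segSum pr f g h (fun i => x (n₁ + i)) (fun j => y (m₁ + j)) k₂ e' n₂ m₂ ≤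
      segSum pr f g h x y (k₁ + k₂) e (n₁ + n₂) (m₁ + m₂) := by
  obtain ⟨r, rfl⟩ : ∃ r, k₁ = r + 1 := ⟨k₁ - 1, by omega⟩
  obtain ⟨q, rfl⟩ : ∃ q, k₂ = q + 1 := ⟨k₂ - 1, by omega⟩
  conv_rhs => rw [segSum, ← (Fin.appendEquiv _ _).sum_comp, Fintype.sum_prod_type]
  rw [segSum, segSum, mul_sum _ _ δ, sum_mul_sum]
  refine sum_le_sum fun u _ => sum_le_sum fun v _ => ?_
  have hsplice := mul_segTerm_le_segTerm_splice hpr hf hg hh hδ x y r q e e' n₁ m₁ n₂ m₂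
    (extPath u) (extPath v)
  rwa [← extPath_append] at hsplice

lemma segSum_pos (hpr : ∀ e e', 0 < pr e e') (hf : ∀ a, 0 < f a) (hg : ∀ a, 0 < g a)
    (hh : ∀ a b, 0 < h a b) (x y : ℕ → A) (u : ℕ → E) {k : ℕ} (hk : 0 < k) :
    0 < segSum pr f g h x y k (u 0) (Nn u k) (Mm u k) := by
  let v : Fin k → E := fun i => u i
  have hv : ∀ j < k, extPath v j = u j := fun j hj => dif_pos hj
  have hterm_nonneg := segTerm_nonneg (fun e e' => (hpr e e').le) (fun a => (hf a).le)
    (fun a => (hg a).le) (fun a b => (hh a b).le) x y k (u 0) (Nn u k) (Mm u k)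
  refine lt_of_lt_of_le ?_ (single_le_sum (fun w _ => hterm_nonneg (extPath w)) (mem_univ v))
  rw [segTerm, if_pos ⟨hv 0 hk, Nn_congr hv, Mm_congr hv⟩]
  exact segWeight_pos hpr hf hg hh x y _ k

lemma segProb_pos (hpr : ∀ e e', 0 < pr e e') (hf : ∀ a, 0 < f a) (hg : ∀ a, 0 < g a)
    (hh : ∀ a b, 0 < h a b) (x y : ℕ → A) (ω : ℕ → E) {s t : ℕ} (hst : s < t) :
    0 < segProb pr f g h x y ω s t (ω s) := by
  rw [segProb_eq_segSum, Nn_sub ω hst.le, Mm_sub ω hst.le]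
  exact segSum_pos hpr hf hg hh _ _ (fun i => ω (s + i)) (Nat.sub_pos_of_lt hst)

lemma mul_segProb_le (hpr : ∀ e e', 0 ≤ pr e e') (hf : ∀ a, 0 ≤ f a) (hg : ∀ a, 0 ≤ g a)
    (hh : ∀ a b, 0 ≤ h a b) {δ : ℝ} (hδ : ∀ e e', δ ≤ pr e e') (x y : ℕ → A) (ω : ℕ → E)
    {s t : ℕ} (hs : 0 < s) (hst : s < t) (e e' : E) :
    δ * segProb pr f g h x y ω 0 s e * segProb pr f g h x y ω s t e' ≤
      segProb pr f g h x y ω 0 t e := by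
  have key := mul_segSum_le hpr hf hg hh hδ x y hs (Nat.sub_pos_of_lt hst) e e' (Nn ω s) (Mm ω s)
    (Nn (fun i => ω (s + i)) (t - s)) (Mm (fun i => ω (s + i)) (t - s))
  rwa [← Nn_add, ← Mm_add, Nat.add_sub_cancel' hst.le, ← Nn_sub ω hst.le, ← Mm_sub ω hst.le,
    ← segProb_eq_segSum, ← segProb_zero_left, ← segProb_zero_left] at key

lemma iSup_segProb_pos (hpr : ∀ e e', 0 < pr e e') (hf : ∀ a, 0 < f a) (hg : ∀ a, 0 < g a)
    (hh : ∀ a b, 0 < h a b) (x y : ℕ → A) (ω : ℕ → E) {s t : ℕ} (hst : s < t) :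
    0 < ⨆ e, segProb pr f g h x y ω s t e :=
  (segProb_pos hpr hf hg hh x y ω hst).trans_le (le_ciSup (Set.finite_range _).bddAbove _)

lemma mul_iSup_segProb_le (hpr : ∀ e e', 0 ≤ pr e e') (hf : ∀ a, 0 ≤ f a)
    (hg : ∀ a, 0 ≤ g a) (hh : ∀ a b, 0 ≤ h a b) {δ : ℝ} (hδ : ∀ e e', δ ≤ pr e e')
    (x y : ℕ → A) (ω : ℕ → E) {s t : ℕ} (hs : 0 < s) (hst : s < t) :
    δ * (⨆ e, segProb pr f g h x y ω 0 s e) * (⨆ e, segProb pr f g h x y ω s t e) ≤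
      ⨆ e, segProb pr f g h x y ω 0 t e := by
  obtain ⟨e₁, he₁⟩ := exists_eq_ciSup_of_finite (f := segProb pr f g h x y ω 0 s)
  obtain ⟨e₂, he₂⟩ := exists_eq_ciSup_of_finite (f := segProb pr f g h x y ω s t)
  rw [← he₁, ← he₂]
  exact (mul_segProb_le hpr hf hg hh hδ x y ω hs hst e₁ e₂).trans
    (le_ciSup (Set.finite_range _).bddAbove e₁)

end Segments

theorem W_superadditive_general {A : Type}
    (pr : E → E → ℝ) (f g : A → ℝ) (h : A → A → ℝ)
    (hpr : ∀ e e', 0 < pr e e')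
    (hf : ∀ a, 0 < f a) (hg : ∀ a, 0 < g a) (hh : ∀ a b, 0 < h a b)
    (hprsum : ∀ e, ∑ e', pr e e' = 1)
    (δθ : ℝ) (hδθ : δθ = ⨅ p : E × E, pr p.1 p.2)
    (ω : ℕ → E) (x y : ℕ → A) (s t : ℕ) (hst : s < t) :
    Wproc pr f g h x y ω δθ 0 s + Wproc pr f g h x y ω δθ s t
      ≤ Wproc pr f g h x y ω δθ 0 t := by
  have hδ_le : ∀ e e', δθ ≤ pr e e' := fun e e' =>
    hδθ ▸ ciInf_le (Set.finite_range _).bddBelow (e, e')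
  have hδ_pos : 0 < δθ := by
    obtain ⟨p, hp⟩ := exists_eq_ciInf_of_finite (f := fun p : E × E => pr p.1 p.2)
    exact hδθ ▸ hp ▸ hpr p.1 p.2
  rcases Nat.eq_zero_or_pos s with rfl | hs
  · have hδ_le_one : δθ ≤ 1 :=
      (hδ_le 0 0).trans (hprsum 0 ▸ single_le_sum (fun e _ => (hpr 0 e).le) (mem_univ 0))
    rw [Wproc, iSup_segProb_self, Real.log_one, zero_add]
    linarith [Real.log_nonpos hδ_pos.le hδ_le_one]
  have hS₁ := iSup_segProb_pos hpr hf hg hh x y ω hs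
  have hS₂ := iSup_segProb_pos hpr hf hg hh x y ω hst
  have hlog := Real.log_le_log (by positivity) <| mul_iSup_segProb_le (fun e e' => (hpr e e').le)
    (fun a => (hf a).le) (fun a => (hg a).le) (fun a b => (hh a b).le) hδ_le x y ω hs hst
  rw [Real.log_mul (by positivity) hS₂.ne', Real.log_mul hδ_pos.ne' hS₁.ne'] at hlog
  simp only [Wproc]
  linarith

/-- **superadditivity of the auxiliary process.** For a pair-HMM with
parameter in `Θ_0` (all transition and emission probabilities strictly positive), with
`δ_θ = min_{e,e'} π(e,e') > 0`, the process
`W_{s,t} = max_e log P(X_{N_s+1:N_t}, Y_{M_s+1:M_t} | ε_{s+1}=e) + log δ_θ` satisfies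
`W_{0,t} ≥ W_{0,s} + W_{s,t}` for all `0 ≤ s < t`. -/
theorem W_superadditive {A : Type} [Fintype A]
    (pr : E → E → ℝ) (mu : E → ℝ) (f g : A → ℝ) (h : A → A → ℝ)
    (hpr : ∀ e e', 0 < pr e e') (hmu : ∀ e, 0 < mu e)
    (hf : ∀ a, 0 < f a) (hg : ∀ a, 0 < g a) (hh : ∀ a b, 0 < h a b)
    (hprsum : ∀ e, ∑ e', pr e e' = 1) (hmusum : ∑ e, mu e = 1)
    (hfsum : ∑ a, f a = 1) (hgsum : ∑ a, g a = 1) (hhsum : ∑ a, ∑ b, h a b = 1)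
    (δθ : ℝ) (hδθ : δθ = ⨅ p : E × E, pr p.1 p.2)
    (ω : ℕ → E) (x y : ℕ → A) (s t : ℕ) (hst : s < t) :
    Wproc pr f g h x y ω δθ 0 s + Wproc pr f g h x y ω δθ s t
      ≤ Wproc pr f g h x y ω δθ 0 t :=
  W_superadditive_general pr f g h hpr hf hg hh hprsum δθ hδθ ω x y s t hst
end

section
/- Bayesian consistency for pair-HMM pseudo-likelihood: let B_δ be compact, ν a prior probability measure on B_δ with ν(U) > 0 for every neighborhood U of β_0, and suppose t^{-1}w_t(θ(β)) converges uniformly on B_δ to w(θ(β)) whose unique maximizer is β_0. Then the posterior measures ν_{t}(dβ) ∝ exp(w_t(θ(β))) ν(dβ) converge weakly to the Dirac mass at β_0 (P_{θ_0}-almost surely). -/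
open Filter MeasureTheory Set

variable {K : Type} [MetricSpace K] [CompactSpace K]
    [MeasurableSpace K] [BorelSpace K]

lemma my_integrable (ν : Measure K) [IsProbabilityMeasure ν]
    (f : K → ℝ) (hf : Continuous f) : Integrable f ν :=
  hf.integrable_of_hasCompactSupport
    (IsCompact.of_isClosed_subset isCompact_univ (isClosed_tsupport f) (Set.subset_univ _))

lemma exp_int_pos (ν : Measure K) [IsProbabilityMeasure ν]
    (g : K → ℝ) (hg : Continuous g) : 0 < ∫ β, Real.exp (g β) ∂ν := by
  rw [integral_pos_iff_support_of_nonneg (fun β => (Real.exp_pos _).le)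
      (my_integrable ν _ (Real.continuous_exp.comp hg))]
  have h : Function.support (fun β => Real.exp (g β)) = Set.univ := by
    ext β; simp [Real.exp_ne_zero]
  rw [h]
  simp

lemma ratio_tendsto_zero (ν : Measure K) [IsProbabilityMeasure ν]
    (β₀ : K) (hν : ∀ U ∈ nhds β₀, 0 < ν U)
    (wt : ℕ → K → ℝ) (hwcont : ∀ t, Continuous (wt t))
    (W : K → ℝ) (hW : Continuous W)
    (hunif : TendstoUniformly (fun t β => wt t β / t) W atTop)
    (hmax : ∀ β, W β ≤ W β₀) (huniq : ∀ β, W β = W β₀ → β = β₀)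
    (δ : ℝ) (hδ : 0 < δ) :
    Tendsto (fun t => (∫ β in {β : K | δ ≤ dist β β₀}, Real.exp (wt t β) ∂ν) /
      ∫ β, Real.exp (wt t β) ∂ν) atTop (nhds 0) := by
  set A := {β : K | δ ≤ dist β β₀} with hAdef
  have hAcl : IsClosed A := isClosed_le continuous_const (continuous_id.dist continuous_const)
  have hAmeas : MeasurableSet A := hAcl.measurableSet
  by_cases hAne : A.Nonempty
  · have hAcomp : IsCompact A := hAcl.isCompact
    obtain ⟨β₁, hβ₁, hmax₁⟩ := hAcomp.exists_isMaxOn hAne hW.continuousOn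
    have hβ₁ne : β₁ ≠ β₀ := by
      intro h
      have h2 : δ ≤ dist β₁ β₀ := hβ₁
      rw [h, dist_self] at h2
      linarith
    have hη : W β₁ < W β₀ := lt_of_le_of_ne (hmax β₁) (fun h => hβ₁ne (huniq β₁ h))
    set η := W β₀ - W β₁ with hηdef
    have hηpos : 0 < η := by simp [hηdef]; linarith
    set U := {β : K | W β₀ - η/4 < W β} with hUdef
    have hUopen : IsOpen U := isOpen_lt continuous_const hW
    have hU0 : β₀ ∈ U := by simp [hUdef]; linarith
    set c := (ν U).toReal with hcdef
    have hcpos : 0 < c :=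
      ENNReal.toReal_pos (hν U (hUopen.mem_nhds hU0)).ne' (measure_ne_top ν U)
    -- the dominating sequence
    have hg : Tendsto (fun t : ℕ => Real.exp (-((t : ℝ) * (η/2))) / c) atTop (nhds 0) := by
      have h1 : Tendsto (fun t : ℕ => -((t : ℝ) * (η/2))) atTop atBot := by
        apply Filter.tendsto_neg_atBot_iff.mpr
        exact Tendsto.atTop_mul_const (by positivity) tendsto_natCast_atTop_atTop
      simpa using (Real.tendsto_exp_atBot.comp h1).div_const c
    apply squeeze_zero' ?_ ?_ hg
    · filter_upwards with t
      apply div_nonneg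
      · exact setIntegral_nonneg hAmeas (fun β _ => (Real.exp_pos _).le)
      · exact (exp_int_pos ν _ (hwcont t)).le
    · have hev := Metric.tendstoUniformly_iff.mp hunif (η/8) (by positivity)
      filter_upwards [hev, eventually_ge_atTop 1] with t ht ht1
      have hT : (0:ℝ) < (t : ℝ) := by exact_mod_cast ht1
      have hint : Integrable (fun β => Real.exp (wt t β)) ν :=
        my_integrable ν _ (Real.continuous_exp.comp (hwcont t))
      -- numerator bound
      have hnum : ∫ β in A, Real.exp (wt t β) ∂ν ≤ Real.exp ((t:ℝ) * (W β₀ - 7*η/8)) := by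
        have h1 : ∫ β in A, Real.exp (wt t β) ∂ν
            ≤ ∫ _β in A, Real.exp ((t:ℝ) * (W β₀ - 7*η/8)) ∂ν := by
          apply setIntegral_mono_on hint.integrableOn (integrable_const _).integrableOn hAmeas
          intro β hβ
          apply Real.exp_le_exp.mpr
          have h2 := ht β
          rw [Real.dist_eq, abs_sub_lt_iff] at h2
          have h3 : wt t β / t < W β + η/8 := by linarith [h2.1]
          have h4 := (div_lt_iff₀ hT).mp h3
          have h5 : W β ≤ W β₁ := hmax₁ hβ
          nlinarith
        rw [setIntegral_const] at h1
        have h6 : (ν A).toReal ≤ 1 := by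
          have := prob_le_one (μ := ν) (s := A)
          simpa using ENNReal.toReal_mono ENNReal.one_ne_top this
        calc ∫ β in A, Real.exp (wt t β) ∂ν
            ≤ (ν A).toReal • Real.exp ((t:ℝ) * (W β₀ - 7*η/8)) := h1
          _ ≤ Real.exp ((t:ℝ) * (W β₀ - 7*η/8)) := by
              rw [smul_eq_mul]
              nlinarith [Real.exp_pos ((t:ℝ) * (W β₀ - 7*η/8)), ENNReal.toReal_nonneg (a := ν A)]
      -- denominator bound
      have hden : c * Real.exp ((t:ℝ) * (W β₀ - 3*η/8)) ≤ ∫ β, Real.exp (wt t β) ∂ν := by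
        have h1 : ∫ _β in U, Real.exp ((t:ℝ) * (W β₀ - 3*η/8)) ∂ν
            ≤ ∫ β in U, Real.exp (wt t β) ∂ν := by
          apply setIntegral_mono_on (integrable_const _).integrableOn hint.integrableOn
            hUopen.measurableSet
          intro β hβ
          apply Real.exp_le_exp.mpr
          have h2 := ht β
          rw [Real.dist_eq, abs_sub_lt_iff] at h2
          have h3 : W β - η/8 < wt t β / t := by linarith [h2.2]
          have h4 : W β₀ - η/4 < W β := hβ
          have h5 : W β₀ - 3*η/8 ≤ wt t β / t := by linarith
          calc (t:ℝ) * (W β₀ - 3*η/8) ≤ (t:ℝ) * (wt t β / t) := by nlinarith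
            _ = wt t β := by field_simp
        rw [setIntegral_const, smul_eq_mul] at h1
        calc c * Real.exp ((t:ℝ) * (W β₀ - 3*η/8)) ≤ ∫ β in U, Real.exp (wt t β) ∂ν := h1
          _ ≤ ∫ β, Real.exp (wt t β) ∂ν :=
              setIntegral_le_integral hint (Filter.Eventually.of_forall fun β => (Real.exp_pos _).le)
      -- combine
      have hDpos : 0 < c * Real.exp ((t:ℝ) * (W β₀ - 3*η/8)) := by positivity
      calc (∫ β in A, Real.exp (wt t β) ∂ν) / ∫ β, Real.exp (wt t β) ∂ν
          ≤ Real.exp ((t:ℝ) * (W β₀ - 7*η/8)) / (c * Real.exp ((t:ℝ) * (W β₀ - 3*η/8))) :=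
            div_le_div₀ (Real.exp_pos _).le hnum hDpos hden
        _ = Real.exp (-((t : ℝ) * (η/2))) / c := by
            rw [mul_comm c, div_mul_eq_div_div, ← Real.exp_sub]
            ring_nf
  · rw [not_nonempty_iff_eq_empty] at hAne
    simp only [hAne, Measure.restrict_empty, integral_zero_measure, zero_div]
    exact tendsto_const_nhds

/-- **Bayesian consistency for the pair-HMM pseudo-likelihood.**
Let `B_δ` be a compact metric space, `ν` a prior probability measure charging every
neighborhood of `β₀`, `w_t : B_δ → ℝ` continuous with `t⁻¹ w_t` converging uniformly to a
continuous function `W` whose unique maximizer is `β₀`.  Then the posterior measures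
`ν_t(dβ) ∝ exp(w_t(β)) ν(dβ)` converge weakly to the Dirac mass at `β₀`: for every
continuous (hence bounded) test function `m` on `B_δ`, the posterior expectation of `m`
converges to `m β₀`. -/
theorem bayesian_consistency {K : Type} [MetricSpace K] [CompactSpace K]
    [MeasurableSpace K] [BorelSpace K]
    (ν : Measure K) [IsProbabilityMeasure ν]
    (β₀ : K) (hν : ∀ U ∈ nhds β₀, 0 < ν U)
    (wt : ℕ → K → ℝ) (hwcont : ∀ t, Continuous (wt t))
    (W : K → ℝ) (hW : Continuous W)
    (hunif : TendstoUniformly (fun t β => wt t β / t) W atTop)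
    (hmax : ∀ β, W β ≤ W β₀) (huniq : ∀ β, W β = W β₀ → β = β₀) :
    ∀ m : K → ℝ, Continuous m →
      Tendsto (fun t => (∫ β, m β * Real.exp (wt t β) ∂ν) / ∫ β, Real.exp (wt t β) ∂ν)
        atTop (nhds (m β₀)) := by
  intro m hm
  have hI : ∀ t, 0 < ∫ β, Real.exp (wt t β) ∂ν := fun t => exp_int_pos ν _ (hwcont t)
  rw [Metric.tendsto_nhds]
  intro ε hε
  -- uniform bound on |m - m β₀|
  obtain ⟨βm, -, hβm⟩ := isCompact_univ.exists_isMaxOn ⟨β₀, mem_univ β₀⟩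
    ((hm.sub continuous_const).abs.continuousOn)
  set C := |m βm - m β₀| with hCdef
  have hC0 : 0 ≤ C := abs_nonneg _
  have hCb : ∀ β, |m β - m β₀| ≤ C := fun β => hβm (mem_univ β)
  -- modulus of continuity at β₀
  obtain ⟨δ, hδ, hδm⟩ := Metric.continuous_iff.mp hm β₀ (ε/2) (by positivity)
  have hr := ratio_tendsto_zero ν β₀ hν wt hwcont W hW hunif hmax huniq δ hδ
  have hεC : 0 < ε/(2*(C+1)) := by positivity
  have hrev := hr.eventually (gt_mem_nhds hεC)
  filter_upwards [hrev] with t hrt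
  rw [Real.dist_eq]
  set A := {β : K | δ ≤ dist β β₀} with hAdef
  have hAmeas : MeasurableSet A :=
    (isClosed_le continuous_const (continuous_id.dist continuous_const)).measurableSet
  set I := ∫ β, Real.exp (wt t β) ∂ν with hIdef
  have hIpos : 0 < I := hI t
  have hint : Integrable (fun β => Real.exp (wt t β)) ν :=
    my_integrable ν _ (Real.continuous_exp.comp (hwcont t))
  have hintm : Integrable (fun β => m β * Real.exp (wt t β)) ν :=
    my_integrable ν _ (hm.mul (Real.continuous_exp.comp (hwcont t)))
  have hintabs : Integrable (fun β => |m β - m β₀| * Real.exp (wt t β)) ν :=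
    my_integrable ν _ (((hm.sub continuous_const).abs).mul
      (Real.continuous_exp.comp (hwcont t)))
  -- rewrite difference
  have hkey : (∫ β, m β * Real.exp (wt t β) ∂ν) / I - m β₀
      = (∫ β, (m β - m β₀) * Real.exp (wt t β) ∂ν) / I := by
    have h1 : ∫ β, (m β - m β₀) * Real.exp (wt t β) ∂ν
        = (∫ β, m β * Real.exp (wt t β) ∂ν) - m β₀ * I := by
      simp only [sub_mul]
      rw [integral_sub hintm (hint.const_mul _), integral_const_mul]
    rw [h1, sub_div, mul_div_assoc, div_self hIpos.ne', mul_one]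
  rw [hkey]
  -- bound numerator by integral of abs
  have habs : |∫ β, (m β - m β₀) * Real.exp (wt t β) ∂ν|
      ≤ ∫ β, |m β - m β₀| * Real.exp (wt t β) ∂ν := by
    have h0 := norm_integral_le_integral_norm (μ := ν)
      (f := fun β => (m β - m β₀) * Real.exp (wt t β))
    simp only [Real.norm_eq_abs, abs_mul, abs_of_pos (Real.exp_pos _)] at h0
    exact h0
  -- split the abs integral
  have hsplit : ∫ β, |m β - m β₀| * Real.exp (wt t β) ∂ν
      = (∫ β in A, |m β - m β₀| * Real.exp (wt t β) ∂ν)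
        + ∫ β in Aᶜ, |m β - m β₀| * Real.exp (wt t β) ∂ν :=
    (integral_add_compl hAmeas hintabs).symm
  -- bound on Aᶜ
  have hb1 : ∫ β in Aᶜ, |m β - m β₀| * Real.exp (wt t β) ∂ν ≤ (ε/2) * I := by
    have h1 : ∫ β in Aᶜ, |m β - m β₀| * Real.exp (wt t β) ∂ν
        ≤ ∫ β in Aᶜ, (ε/2) * Real.exp (wt t β) ∂ν := by
      apply setIntegral_mono_on hintabs.integrableOn (hint.const_mul _).integrableOn
        hAmeas.compl
      intro β hβ
      have h2 : dist β β₀ < δ := by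
        simp only [hAdef, mem_compl_iff, mem_setOf_eq, not_le] at hβ
        exact hβ
      have h3 : |m β - m β₀| ≤ ε/2 := by
        have := hδm β h2
        rw [Real.dist_eq] at this
        linarith
      exact mul_le_mul_of_nonneg_right h3 (Real.exp_pos _).le
    calc ∫ β in Aᶜ, |m β - m β₀| * Real.exp (wt t β) ∂ν
        ≤ ∫ β in Aᶜ, (ε/2) * Real.exp (wt t β) ∂ν := h1
      _ = (ε/2) * ∫ β in Aᶜ, Real.exp (wt t β) ∂ν := by rw [integral_const_mul]
      _ ≤ (ε/2) * I := by
          apply mul_le_mul_of_nonneg_left _ (by positivity)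
          exact setIntegral_le_integral hint
            (Filter.Eventually.of_forall fun β => (Real.exp_pos _).le)
  -- bound on A
  have hb2 : ∫ β in A, |m β - m β₀| * Real.exp (wt t β) ∂ν
      ≤ C * ∫ β in A, Real.exp (wt t β) ∂ν := by
    rw [← integral_const_mul]
    apply setIntegral_mono_on hintabs.integrableOn (hint.const_mul _).integrableOn hAmeas
    intro β _
    exact mul_le_mul_of_nonneg_right (hCb β) (Real.exp_pos _).le
  have hApos : 0 ≤ ∫ β in A, Real.exp (wt t β) ∂ν :=
    setIntegral_nonneg hAmeas (fun β _ => (Real.exp_pos _).le)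
  -- put it all together
  have hfinal : |(∫ β, (m β - m β₀) * Real.exp (wt t β) ∂ν) / I|
      ≤ ε/2 + C * ((∫ β in A, Real.exp (wt t β) ∂ν) / I) := by
    rw [abs_div, abs_of_pos hIpos, div_le_iff₀ hIpos]
    calc |∫ β, (m β - m β₀) * Real.exp (wt t β) ∂ν|
        ≤ ∫ β, |m β - m β₀| * Real.exp (wt t β) ∂ν := habs
      _ ≤ C * (∫ β in A, Real.exp (wt t β) ∂ν) + (ε/2) * I := by
          rw [hsplit]; linarith
      _ = (ε/2 + C * ((∫ β in A, Real.exp (wt t β) ∂ν) / I)) * I := by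
          field_simp; ring
  have hrt' : (∫ β in A, Real.exp (wt t β) ∂ν) / I < ε/(2*(C+1)) := hrt
  have hCr : C * ((∫ β in A, Real.exp (wt t β) ∂ν) / I) < ε/2 := by
    have h1 : C * ((∫ β in A, Real.exp (wt t β) ∂ν) / I) ≤ C * (ε/(2*(C+1))) :=
      mul_le_mul_of_nonneg_left hrt'.le hC0
    have h2 : C * (ε/(2*(C+1))) < ε/2 := by
      rw [← mul_div_assoc, div_lt_iff₀ (by positivity : (0:ℝ) < 2*(C+1))]
      nlinarith
    linarith
  linarith
end

section
/- In the pair-HMM, if h(x,y) = f(x)g(y) for all x,y ∈ A, then the joint distribution of the observed sequences factorizes: P(X_{1:N_t}, Y_{1:M_t} | ε_{1:t}) = ∏_{i=1}^{N_t} f(X_i) · ∏_{j=1}^{M_t} g(Y_j), independently of the hidden path ε_{1:t}; hence the hidden transition matrix π is not identifiable from the observations, and Assumption 1 (∃ x,y with h(x,y) ≠ f(x)g(y)) is necessary for identifiability of θ = (π, f, g, h). -/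
open Finset Filter MeasureTheory
open scoped Classical

lemma emit_factor {A : Type} (f g : A → ℝ) (h : A → A → ℝ)
    (hfact : ∀ a b, h a b = f a * g b) (x y : ℕ → A) (u : ℕ → E) :
    ∀ t : ℕ, emit f g h x y u 0 t
      = (∏ i ∈ Finset.range (Nn u t), f (x i)) * ∏ j ∈ Finset.range (Mm u t), g (y j) := by
  intro t
  induction t with
  | zero => simp [emit, Nn, Mm]
  | succ t ih =>
    have hN : Nn u (t + 1) = Nn u t + (stepv (u t)).1 := by
      simp [Nn, Finset.sum_range_succ]
    have hM : Mm u (t + 1) = Mm u t + (stepv (u t)).2 := by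
      simp [Mm, Finset.sum_range_succ]
    have he : emit f g h x y u 0 (t + 1)
        = emit f g h x y u 0 t *
          (if u t = 0 then f (x (Nn u t))
           else if u t = 1 then g (y (Mm u t))
           else h (x (Nn u t)) (y (Mm u t))) := by
      simp only [emit, Nat.Ico_zero_eq_range, Finset.prod_range_succ]
    rw [he, ih, hN, hM]
    generalize u t = e
    fin_cases e <;>
      simp [stepv, hfact, Finset.prod_range_succ] <;> ring

/-- **necessity of Assumption 1.** If `h(x,y) = f(x)g(y)` for all letters,
then the conditional law of the observations given the hidden path factorizes as
`∏ f(X_i) ∏ g(Y_j)`, independently of the hidden path; consequently, for *any* hidden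
transition matrix `pr` (with any initial law `mu`), the joint probability of a hidden path
of length `t` ending at `(n,m)` together with the observations is
`P(Z_t = (n,m)) ∏_{i<n} f(x_i) ∏_{j<m} g(y_j)`.  Hence two parameters sharing the same
`f, g, h = f·g` but different transition matrices `pr₁ ≠ pr₂` induce the same conditional
law of the observations given the path endpoint: `pr` is not identifiable, so
Assumption 1 (`∃ x y, h(x,y) ≠ f(x)g(y)`) is necessary for identifiability. -/
theorem non_identifiability_of_transitions {A : Type} (f g : A → ℝ) (h : A → A → ℝ)
    (hfact : ∀ a b, h a b = f a * g b)
    (pr₁ pr₂ : E → E → ℝ) (mu₁ mu₂ : E → ℝ) (x y : ℕ → A) :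
    (∀ (t : ℕ) (u : ℕ → E),
      emit f g h x y u 0 t
        = (∏ i ∈ Finset.range (Nn u t), f (x i)) * ∏ j ∈ Finset.range (Mm u t), g (y j)) ∧
    (∀ t n m : ℕ,
      jointProb pr₁ mu₁ f g h x y t n m
        = walkProb pr₁ mu₁ t n m *
            ((∏ i ∈ Finset.range n, f (x i)) * ∏ j ∈ Finset.range m, g (y j))) ∧
    (∀ t n m : ℕ,
      jointProb pr₂ mu₂ f g h x y t n m
        = walkProb pr₂ mu₂ t n m *
            ((∏ i ∈ Finset.range n, f (x i)) * ∏ j ∈ Finset.range m, g (y j))) := by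
  have key : ∀ (pr : E → E → ℝ) (mu : E → ℝ) (t n m : ℕ),
      jointProb pr mu f g h x y t n m
        = walkProb pr mu t n m *
            ((∏ i ∈ Finset.range n, f (x i)) * ∏ j ∈ Finset.range m, g (y j)) := by
    intro pr mu t n m
    unfold jointProb walkProb
    rw [Finset.sum_mul]
    refine Finset.sum_congr rfl fun u _ => ?_
    split_ifs with hc
    · rw [emit_factor f g h hfact x y (extPath u) t, hc.1, hc.2]
    · simp
  exact ⟨fun t u => emit_factor f g h hfact x y u t, key pr₁ mu₁, key pr₂ mu₂⟩
end
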